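/- Let S be a finite nonempty set partitioned into nonempty disjoint subsets S = T_1 ∪ T_2 ∪ ⋯ ∪ T_L, and on ℝ^S define the generalized Schinzel norm ∇(x) = Σ_{ℓ=1}^L δ(π_{T_ℓ}(x)), where δ(y) = (1/2)|Σ_{s∈S} y_s| + (1/2)Σ_{s∈S} |y_s| and π_{T_ℓ} is the coordinate projection onto the subspace of vectors supported on T_ℓ. Then ∇ is a norm on ℝ^S, and its closed unit ball K_∇ = {x ∈ ℝ^S : ∇(x) ≤ 1} satisfies 2^{|S|}/|S|! ≤ Vol_S(K_∇) ≤ (2|S|)!/(|S|!)^3, where Vol_S is Lebesgue measure on ℝ^S. -/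

import Mathlib

/-!
Each block term of `∇` is the Schinzel norm `δ(π_T x) = ½|Σ_T x| + ½ Σ_T |x|`, a seminorm, and since
`Σ x = Σ x⁺ - Σ x⁻` and `Σ |x| = Σ x⁺ + Σ x⁻` it equals `max (Σ_T x⁺) (Σ_T x⁻)`. Summing over the
blocks, `K_∇` contains the cross-polytope `{Σ |x| ≤ 1}`, of volume `2ⁿ/n!`, and is contained in
`D = {Σ x⁺ ≤ 1, Σ x⁻ ≤ 1}`. Reflecting the orthant where exactly the coordinates in `E` are positive
onto the positive orthant turns its intersection with `D` into a product of standard simplices of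
dimensions `|E|` and `n - |E|` (the volume `1/n!` of a simplex comes from the cross-polytope by the
same decomposition), so `vol D = Σ_E 1/(|E|! (n-|E|)!) = Σ_j C(n,j)²/n! = (2n)!/(n!)³`.
-/

open MeasureTheory

/-- The generalized Schinzel norm attached to a partition `T 0, …, T (L-1)` of a finite set `S`:
`∇(x) = Σ_ℓ ((1/2)|Σ_{s ∈ T ℓ} x s| + (1/2) Σ_{s ∈ T ℓ} |x s|)`. -/
noncomputable def nabla {S : Type*} [Fintype S] {L : ℕ} (T : Fin L → Finset S)
    (x : S → ℝ) : ℝ :=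
  ∑ ℓ, ((1 / 2 : ℝ) * |∑ s ∈ T ℓ, x s| + (1 / 2 : ℝ) * ∑ s ∈ T ℓ, |x s|)

namespace SchinzelNorm

lemma sum_range_choose_div_factorial_mul_factorial (n : ℕ) :
    ∑ j ∈ Finset.range (n + 1), (n.choose j : ℝ) / (j.factorial * (n - j).factorial) =
      (2 * n).factorial / (n.factorial : ℝ) ^ 3 := by
  have hterm : ∀ j ∈ Finset.range (n + 1),
      (n.choose j : ℝ) / (j.factorial * (n - j).factorial) =
        (n.choose j : ℝ) ^ 2 / n.factorial := by
    intro j hj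
    rw [Nat.cast_choose ℝ (Nat.lt_succ_iff.1 (Finset.mem_range.1 hj))]
    field_simp
  have hsq : ∑ j ∈ Finset.range (n + 1), (n.choose j : ℝ) ^ 2 = ((2 * n).choose n : ℝ) := by
    exact_mod_cast Nat.sum_range_choose_sq n
  rw [Finset.sum_congr rfl hterm, ← Finset.sum_div, hsq, Nat.cast_choose ℝ (by omega : n ≤ 2 * n),
    show 2 * n - n = n by omega]
  field_simp

section Orthants

variable {ι : Type*}

def posOrthant (ι : Type*) : Set (ι → ℝ) := Set.univ.pi fun _ => Set.Ioi 0

@[simp]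
lemma mem_posOrthant {x : ι → ℝ} : x ∈ posOrthant ι ↔ ∀ i, 0 < x i := by
  simp [posOrthant]

lemma measurableSet_posOrthant [Countable ι] : MeasurableSet (posOrthant ι) :=
  MeasurableSet.univ_pi fun _ => measurableSet_Ioi

variable [DecidableEq ι]

def signFlip (E : Finset ι) (x : ι → ℝ) : ι → ℝ := fun i => if i ∈ E then x i else -x i

lemma signFlip_involutive (E : Finset ι) : Function.Involutive (signFlip E) := by
  intro x
  funext i
  by_cases hi : i ∈ E <;> simp [signFlip, hi]

lemma abs_signFlip (E : Finset ι) (x : ι → ℝ) (i : ι) : |signFlip E x i| = |x i| := by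
  by_cases hi : i ∈ E <;> simp [signFlip, hi]

lemma pairwise_disjoint_signFlip_preimage_posOrthant :
    Pairwise (Function.onFun Disjoint fun E : Finset ι => signFlip E ⁻¹' posOrthant ι) := by
  intro E F hEF
  refine Set.disjoint_left.2 fun x hE hF => hEF (Finset.ext fun i => ?_)
  have hxE := mem_posOrthant.1 hE i
  have hxF := mem_posOrthant.1 hF i
  by_cases hiE : i ∈ E <;> by_cases hiF : i ∈ F <;> simp [signFlip, hiE, hiF] at hxE hxF ⊢ <;>
    linarith

variable [Fintype ι]

lemma measurePreserving_signFlip (E : Finset ι) :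
    MeasurePreserving (signFlip E) volume volume := by
  refine volume_preserving_pi (f := fun i (t : ℝ) => if i ∈ E then t else -t) fun i => ?_
  split_ifs
  · exact MeasurePreserving.id _
  · exact Measure.measurePreserving_neg _

lemma iUnion_signFlip_preimage_posOrthant_ae_eq_univ :
    (⋃ E : Finset ι, signFlip E ⁻¹' posOrthant ι) =ᵐ[volume] (Set.univ : Set (ι → ℝ)) := by
  rw [ae_eq_univ]
  refine measure_mono_null (t := ⋃ i, {x : ι → ℝ | x i = 0}) (fun x hx => ?_)
    (measure_iUnion_null fun i => by rw [volume_pi]; exact Measure.pi_hyperplane _ i 0)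
  by_contra hx0
  simp only [Set.mem_iUnion, Set.mem_ofPred_eq, not_exists] at hx0
  refine hx (Set.mem_iUnion.2 ⟨Finset.univ.filter fun i => 0 < x i, mem_posOrthant.2 fun i => ?_⟩)
  by_cases hi : 0 < x i
  · simp [signFlip, hi]
  · simpa [signFlip, hi] using lt_of_le_of_ne (not_lt.1 hi) (hx0 i)

lemma volume_eq_sum_volume_signFlip_preimage_inter {A : Set (ι → ℝ)} (hA : MeasurableSet A) :
    volume A = ∑ E : Finset ι, volume (signFlip E ⁻¹' A ∩ posOrthant ι) := by
  have hmeas (E : Finset ι) : MeasurableSet (signFlip E ⁻¹' posOrthant ι) :=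
    (measurePreserving_signFlip E).measurable measurableSet_posOrthant
  calc volume A = volume (A ∩ ⋃ E : Finset ι, signFlip E ⁻¹' posOrthant ι) :=
        (measure_congr (inter_ae_eq_left_of_ae_eq_univ
          iUnion_signFlip_preimage_posOrthant_ae_eq_univ)).symm
    _ = ∑ E : Finset ι, volume (A ∩ signFlip E ⁻¹' posOrthant ι) := by
        rw [Set.inter_iUnion, measure_iUnion, tsum_fintype]
        · exact fun E F hEF => (pairwise_disjoint_signFlip_preimage_posOrthant hEF).mono
            Set.inter_subset_right Set.inter_subset_right
        · exact fun E => hA.inter (hmeas E)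
    _ = ∑ E : Finset ι, volume (signFlip E ⁻¹' A ∩ posOrthant ι) := by
        refine Finset.sum_congr rfl fun E _ => ?_
        rw [← (measurePreserving_signFlip E).measure_preimage
            (hA.inter (hmeas E)).nullMeasurableSet, Set.preimage_inter, ← Set.preimage_comp, (signFlip_involutive E).comp_self,
          Set.preimage_id]

end Orthants

section Simplices

variable {ι : Type*} [Fintype ι]

def cornerSimplex (ι : Type*) [Fintype ι] : Set (ι → ℝ) :=
  posOrthant ι ∩ {x | ∑ i, x i ≤ 1}

lemma measurableSet_cornerSimplex : MeasurableSet (cornerSimplex ι) :=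
  measurableSet_posOrthant.inter (measurableSet_le (by fun_prop) measurable_const)

lemma volume_setOf_sum_abs_le_one [Nonempty ι] :
    volume {x : ι → ℝ | ∑ i, |x i| ≤ 1} =
      ENNReal.ofReal (2 ^ Fintype.card ι / (Fintype.card ι).factorial) := by
  have h := volume_sum_rpow_le (ι := ι) (p := 1) le_rfl 1
  simp only [Real.rpow_one, div_one, ENNReal.ofReal_one, one_pow] at h
  rw [h, one_add_one_eq_two, Real.Gamma_two, mul_one, Real.Gamma_nat_eq_factorial, one_mul]

lemma volume_cornerSimplex :
    volume (cornerSimplex ι) = ENNReal.ofReal (1 / (Fintype.card ι).factorial) := by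
  classical
  cases isEmpty_or_nonempty ι
  · have : cornerSimplex ι = Set.univ := by ext x; simp [cornerSimplex]
    simp [this, volume_pi]
  have hball : MeasurableSet {x : ι → ℝ | ∑ i, |x i| ≤ 1} :=
    measurableSet_le (by fun_prop) measurable_const
  have hpiece (E : Finset ι) :
      signFlip E ⁻¹' {x : ι → ℝ | ∑ i, |x i| ≤ 1} ∩ posOrthant ι = cornerSimplex ι := by
    ext x
    simp only [cornerSimplex, Set.mem_inter_iff, Set.mem_preimage, Set.mem_ofPred_eq,
      abs_signFlip, mem_posOrthant]
    rw [and_comm]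
    refine and_congr_right fun hx => ?_
    rw [Finset.sum_congr rfl fun i _ => abs_of_pos (hx i)]
  have h := volume_eq_sum_volume_signFlip_preimage_inter hball
  simp only [hpiece, Finset.sum_const, Finset.card_univ, Fintype.card_finset, nsmul_eq_mul,
    volume_setOf_sum_abs_le_one] at h
  rw [div_eq_mul_one_div, ENNReal.ofReal_mul (by positivity), ENNReal.ofReal_pow zero_le_two,
    ENNReal.ofReal_ofNat, Nat.cast_pow, Nat.cast_ofNat] at h
  exact ((ENNReal.mul_right_inj (by positivity) (by simp)).1 h).symm

lemma volume_posOrthant_inter_sum_le_one_and_sum_compl_le_one [DecidableEq ι] (E : Finset ι) :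
    volume (posOrthant ι ∩ {x | ∑ i ∈ E, x i ≤ 1 ∧ ∑ i ∈ Eᶜ, x i ≤ 1}) =
      ENNReal.ofReal (1 / E.card.factorial) *
        ENNReal.ofReal (1 / (Fintype.card ι - E.card).factorial) := by
  have hset : posOrthant ι ∩ {x | ∑ i ∈ E, x i ≤ 1 ∧ ∑ i ∈ Eᶜ, x i ≤ 1} =
      MeasurableEquiv.piEquivPiSubtypeProd (fun _ : ι => ℝ) (· ∈ E) ⁻¹'
        (cornerSimplex {i // i ∈ E} ×ˢ cornerSimplex {i // i ∉ E}) := by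
    ext x
    simp only [cornerSimplex, Set.mem_inter_iff, Set.mem_preimage, Set.mem_prod, mem_posOrthant,
      Set.mem_ofPred_eq, MeasurableEquiv.piEquivPiSubtypeProd_apply, Subtype.forall,
      ← Finset.sum_subtype E (fun _ => Iff.rfl) x,
      ← Finset.sum_subtype Eᶜ (fun _ => Finset.mem_compl) x]
    constructor
    · rintro ⟨hpos, hE, hEc⟩
      exact ⟨⟨fun i _ => hpos i, hE⟩, fun i _ => hpos i, hEc⟩
    · rintro ⟨⟨hposE, hE⟩, hposEc, hEc⟩
      exact ⟨fun i => if hi : i ∈ E then hposE i hi else hposEc i hi, hE, hEc⟩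
  rw [hset, (volume_preserving_piEquivPiSubtypeProd _ _).measure_preimage
    (measurableSet_cornerSimplex.prod measurableSet_cornerSimplex).nullMeasurableSet,
    Measure.volume_eq_prod, Measure.prod_prod]
  have hE := volume_cornerSimplex (ι := E)
  have hEc := volume_cornerSimplex (ι := {i // i ∉ E})
  rw [Fintype.card_coe] at hE
  rw [Fintype.card_subtype_compl, Fintype.card_coe] at hEc
  -- `piEquivPiSubtypeProd` equips `{i // i ∈ E}` with `Subtype.fintype`, not `E`'s own instance
  convert congrArg₂ (· * ·) hE hEc

end Simplices

section PosNegBall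

variable {ι : Type*} [Fintype ι]

def posNegBall (ι : Type*) [Fintype ι] : Set (ι → ℝ) := {x | ∑ i, (x i)⁺ ≤ 1 ∧ ∑ i, (x i)⁻ ≤ 1}

lemma measurableSet_posNegBall : MeasurableSet (posNegBall ι) := by
  have hpos : Measurable fun x : ι → ℝ => ∑ i, (x i)⁺ :=
    Finset.measurable_sum _ fun i _ => (measurable_pi_apply i).max measurable_const
  have hneg : Measurable fun x : ι → ℝ => ∑ i, (x i)⁻ :=
    Finset.measurable_sum _ fun i _ => (measurable_pi_apply i).neg.max measurable_const
  exact (measurableSet_le hpos measurable_const).inter (measurableSet_le hneg measurable_const)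

lemma sum_posPart_signFlip [DecidableEq ι] (E : Finset ι) {x : ι → ℝ} (hx : ∀ i, 0 < x i) :
    ∑ i, (signFlip E x i)⁺ = ∑ i ∈ E, x i := by
  rw [← Finset.univ_inter E, ← Finset.sum_ite_mem]
  refine Finset.sum_congr rfl fun i _ => ?_
  by_cases hi : i ∈ E <;> simp [signFlip, hi, (hx i).le]

lemma sum_negPart_signFlip [DecidableEq ι] (E : Finset ι) {x : ι → ℝ} (hx : ∀ i, 0 < x i) :
    ∑ i, (signFlip E x i)⁻ = ∑ i ∈ Eᶜ, x i := by
  rw [← Finset.univ_inter Eᶜ, ← Finset.sum_ite_mem]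
  refine Finset.sum_congr rfl fun i _ => ?_
  by_cases hi : i ∈ E <;> simp [signFlip, hi, (hx i).le]

lemma volume_posNegBall :
    volume (posNegBall ι) = ENNReal.ofReal
      ((2 * Fintype.card ι).factorial / ((Fintype.card ι).factorial : ℝ) ^ 3) := by
  classical
  have hpiece (E : Finset ι) : signFlip E ⁻¹' posNegBall ι ∩ posOrthant ι =
      posOrthant ι ∩ {x | ∑ i ∈ E, x i ≤ 1 ∧ ∑ i ∈ Eᶜ, x i ≤ 1} := by
    ext x
    simp only [posNegBall, Set.mem_inter_iff, Set.mem_preimage, Set.mem_ofPred_eq, mem_posOrthant]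
    rw [and_comm]
    refine and_congr_right fun hx => ?_
    rw [sum_posPart_signFlip E hx, sum_negPart_signFlip E hx]
  rw [volume_eq_sum_volume_signFlip_preimage_inter measurableSet_posNegBall]
  simp only [hpiece, volume_posOrthant_inter_sum_le_one_and_sum_compl_le_one,
    ← ENNReal.ofReal_mul (one_div_nonneg.2 (Nat.cast_nonneg _)), one_div_mul_one_div]
  rw [← ENNReal.ofReal_sum_of_nonneg fun _ _ => by positivity, ← Finset.powerset_univ,
    Finset.sum_powerset_apply_card
      (fun j => 1 / ((j.factorial : ℝ) * (Fintype.card ι - j).factorial)),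
    Finset.card_univ, ← sum_range_choose_div_factorial_mul_factorial]
  simp only [nsmul_eq_mul, mul_one_div]

end PosNegBall

section Schinzel

variable {ι : Type*}

noncomputable def schinzelOn (t : Finset ι) (x : ι → ℝ) : ℝ :=
  1 / 2 * |∑ s ∈ t, x s| + 1 / 2 * ∑ s ∈ t, |x s|

lemma schinzelOn_nonneg (t : Finset ι) (x : ι → ℝ) : 0 ≤ schinzelOn t x := by
  unfold schinzelOn
  positivity

lemma schinzelOn_smul (t : Finset ι) (r : ℝ) (x : ι → ℝ) :
    schinzelOn t (r • x) = |r| * schinzelOn t x := by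
  simp only [schinzelOn, Pi.smul_apply, smul_eq_mul, ← Finset.mul_sum, abs_mul]
  ring

lemma schinzelOn_add_le (t : Finset ι) (x y : ι → ℝ) :
    schinzelOn t (x + y) ≤ schinzelOn t x + schinzelOn t y := by
  have hsum : |∑ s ∈ t, (x + y) s| ≤ |∑ s ∈ t, x s| + |∑ s ∈ t, y s| := by
    simpa only [Pi.add_apply, Finset.sum_add_distrib] using abs_add_le _ _
  have habs : ∑ s ∈ t, |(x + y) s| ≤ ∑ s ∈ t, |x s| + ∑ s ∈ t, |y s| := by
    rw [← Finset.sum_add_distrib]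
    exact Finset.sum_le_sum fun s _ => abs_add_le _ _
  unfold schinzelOn
  linarith

lemma schinzelOn_le_sum_abs (t : Finset ι) (x : ι → ℝ) : schinzelOn t x ≤ ∑ s ∈ t, |x s| := by
  have := Finset.abs_sum_le_sum_abs x t
  unfold schinzelOn
  linarith

lemma sum_abs_le_two_mul_schinzelOn (t : Finset ι) (x : ι → ℝ) :
    ∑ s ∈ t, |x s| ≤ 2 * schinzelOn t x := by
  have := abs_nonneg (∑ s ∈ t, x s)
  unfold schinzelOn
  linarith

lemma schinzelOn_eq_max (t : Finset ι) (x : ι → ℝ) :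
    schinzelOn t x = max (∑ s ∈ t, (x s)⁺) (∑ s ∈ t, (x s)⁻) := by
  have hsum : ∑ s ∈ t, x s = ∑ s ∈ t, (x s)⁺ - ∑ s ∈ t, (x s)⁻ := by
    simp only [← Finset.sum_sub_distrib, posPart_sub_negPart]
  have habs : ∑ s ∈ t, |x s| = ∑ s ∈ t, (x s)⁺ + ∑ s ∈ t, (x s)⁻ := by
    simp only [← Finset.sum_add_distrib, posPart_add_negPart]
  rw [schinzelOn, hsum, habs]
  rcases le_total (∑ s ∈ t, (x s)⁺) (∑ s ∈ t, (x s)⁻) with h | h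
  · rw [max_eq_right h, abs_of_nonpos (sub_nonpos.2 h)]
    ring
  · rw [max_eq_left h, abs_of_nonneg (sub_nonneg.2 h)]
    ring

end Schinzel

lemma sum_eq_sum_sum_of_partition {ι κ M : Type*} [Fintype ι] [Fintype κ] [AddCommMonoid M]
    {T : κ → Finset ι} (hdisj : Pairwise (Function.onFun Disjoint T)) (hcover : ∀ s, ∃ ℓ, s ∈ T ℓ)
    (f : ι → M) : ∑ s, f s = ∑ ℓ, ∑ s ∈ T ℓ, f s := by
  classical
  rw [← Finset.sum_biUnion fun i _ j _ hij => hdisj hij]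
  congr
  ext s
  simpa using hcover s

end SchinzelNorm

open SchinzelNorm

section Nabla

variable {ι : Type*} [Fintype ι] {L : ℕ} (T : Fin L → Finset ι)

lemma nabla_eq_sum_schinzelOn (x : ι → ℝ) : nabla T x = ∑ ℓ, schinzelOn (T ℓ) x := rfl

lemma nabla_nonneg (x : ι → ℝ) : 0 ≤ nabla T x :=
  Finset.sum_nonneg fun ℓ _ => schinzelOn_nonneg (T ℓ) x

lemma nabla_smul (r : ℝ) (x : ι → ℝ) : nabla T (r • x) = |r| * nabla T x := by
  simp only [nabla_eq_sum_schinzelOn, schinzelOn_smul, Finset.mul_sum]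

lemma nabla_add_le (x y : ι → ℝ) : nabla T (x + y) ≤ nabla T x + nabla T y := by
  simp only [nabla_eq_sum_schinzelOn, ← Finset.sum_add_distrib]
  exact Finset.sum_le_sum fun ℓ _ => schinzelOn_add_le (T ℓ) x y

variable {T}

lemma nabla_eq_zero_iff (hcover : ∀ s, ∃ ℓ, s ∈ T ℓ) {x : ι → ℝ} : nabla T x = 0 ↔ x = 0 := by
  refine ⟨fun hx => funext fun s => ?_, fun hx => by simp [hx, nabla]⟩
  obtain ⟨ℓ, hs⟩ := hcover s
  have hℓ : schinzelOn (T ℓ) x = 0 := (Finset.sum_eq_zero_iff_of_nonneg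
    fun ℓ _ => schinzelOn_nonneg (T ℓ) x).1 hx ℓ (Finset.mem_univ ℓ)
  have hsum : ∑ t ∈ T ℓ, |x t| ≤ 0 := by
    simpa [hℓ] using sum_abs_le_two_mul_schinzelOn (T ℓ) x
  have hxs := Finset.sum_eq_zero_iff_of_nonneg (fun t _ => abs_nonneg (x t)) |>.1
    (le_antisymm hsum (Finset.sum_nonneg fun t _ => abs_nonneg (x t))) s hs
  simpa using hxs

lemma nabla_le_sum_abs (hdisj : Pairwise (Function.onFun Disjoint T))
    (hcover : ∀ s, ∃ ℓ, s ∈ T ℓ) (x : ι → ℝ) : nabla T x ≤ ∑ s, |x s| := by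
  rw [sum_eq_sum_sum_of_partition hdisj hcover]
  exact Finset.sum_le_sum fun ℓ _ => schinzelOn_le_sum_abs (T ℓ) x

lemma setOf_sum_abs_le_one_subset_setOf_nabla_le_one
    (hdisj : Pairwise (Function.onFun Disjoint T)) (hcover : ∀ s, ∃ ℓ, s ∈ T ℓ) :
    {x : ι → ℝ | ∑ s, |x s| ≤ 1} ⊆ {x | nabla T x ≤ 1} :=
  fun x hx => (nabla_le_sum_abs hdisj hcover x).trans hx

lemma setOf_nabla_le_one_subset_posNegBall (hdisj : Pairwise (Function.onFun Disjoint T))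
    (hcover : ∀ s, ∃ ℓ, s ∈ T ℓ) : {x : ι → ℝ | nabla T x ≤ 1} ⊆ posNegBall ι := by
  intro x hx
  constructor
  · calc ∑ s, (x s)⁺ = ∑ ℓ, ∑ s ∈ T ℓ, (x s)⁺ := sum_eq_sum_sum_of_partition hdisj hcover _
      _ ≤ nabla T x := Finset.sum_le_sum fun ℓ _ =>
          (le_max_left _ _).trans (schinzelOn_eq_max (T ℓ) x).ge
      _ ≤ 1 := hx
  · calc ∑ s, (x s)⁻ = ∑ ℓ, ∑ s ∈ T ℓ, (x s)⁻ := sum_eq_sum_sum_of_partition hdisj hcover _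
      _ ≤ nabla T x := Finset.sum_le_sum fun ℓ _ =>
          (le_max_right _ _).trans (schinzelOn_eq_max (T ℓ) x).ge
      _ ≤ 1 := hx

end Nabla

theorem nabla_norm_and_volume_general (S : Type*) [Fintype S] [Nonempty S]
    (L : ℕ) (T : Fin L → Finset S)
    (hdisj : ∀ i j, i ≠ j → Disjoint (T i) (T j))
    (hcover : ∀ s : S, ∃ ℓ, s ∈ T ℓ) :
    (∀ x : S → ℝ, 0 ≤ nabla T x) ∧
      (∀ x : S → ℝ, nabla T x = 0 ↔ x = 0) ∧
      (∀ (r : ℝ) (x : S → ℝ), nabla T (r • x) = |r| * nabla T x) ∧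
      (∀ x y : S → ℝ, nabla T (x + y) ≤ nabla T x + nabla T y) ∧
      ENNReal.ofReal ((2 : ℝ) ^ (Fintype.card S) / (Fintype.card S).factorial) ≤
        MeasureTheory.volume {x : S → ℝ | nabla T x ≤ 1} ∧
      MeasureTheory.volume {x : S → ℝ | nabla T x ≤ 1} ≤
        ENNReal.ofReal
          (((2 * Fintype.card S).factorial : ℝ) / ((Fintype.card S).factorial : ℝ) ^ 3) := by
  have hpart : Pairwise (Function.onFun Disjoint T) := fun i j => hdisj i j
  refine ⟨nabla_nonneg T, fun x => nabla_eq_zero_iff hcover, nabla_smul T, nabla_add_le T, ?_, ?_⟩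
  · rw [← volume_setOf_sum_abs_le_one]
    exact measure_mono (setOf_sum_abs_le_one_subset_setOf_nabla_le_one hpart hcover)
  · rw [← volume_posNegBall]
    exact measure_mono (setOf_nabla_le_one_subset_posNegBall hpart hcover)

/-- **(Akhtari–Vaaler, Section 7).**  Let `S` be a finite nonempty set partitioned into nonempty
disjoint subsets `T_1, …, T_L`.  Then the generalized Schinzel norm `∇` is a norm on `ℝ^S` and
its closed unit ball `K_∇` satisfies `2^{|S|}/|S|! ≤ Vol(K_∇) ≤ (2|S|)!/(|S|!)^3`. -/
theorem nabla_norm_and_volume (S : Type*) [Fintype S] [Nonempty S]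
    (L : ℕ) (T : Fin L → Finset S)
    (hne : ∀ ℓ, (T ℓ).Nonempty)
    (hdisj : ∀ i j, i ≠ j → Disjoint (T i) (T j))
    (hcover : ∀ s : S, ∃ ℓ, s ∈ T ℓ) :
    (∀ x : S → ℝ, 0 ≤ nabla T x) ∧
      (∀ x : S → ℝ, nabla T x = 0 ↔ x = 0) ∧
      (∀ (r : ℝ) (x : S → ℝ), nabla T (r • x) = |r| * nabla T x) ∧
      (∀ x y : S → ℝ, nabla T (x + y) ≤ nabla T x + nabla T y) ∧
      ENNReal.ofReal ((2 : ℝ) ^ (Fintype.card S) / (Fintype.card S).factorial) ≤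
        MeasureTheory.volume {x : S → ℝ | nabla T x ≤ 1} ∧
      MeasureTheory.volume {x : S → ℝ | nabla T x ≤ 1} ≤
        ENNReal.ofReal
          (((2 * Fintype.card S).factorial : ℝ) / ((Fintype.card S).factorial : ℝ) ^ 3) :=
  nabla_norm_and_volume_general S L T hdisj hcover
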